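/- arXiv:1109.1857 — 4 statements merged into one kernel-verified Lean document; each statement's English description precedes it below -/
import Mathlib

section
/- Let H be a complex Hilbert space, let (g_n)_{n≥1} be a sequence of vectors in H, and let B ≥ 1. Suppose that for every finitely supported sequence (α_n) of complex numbers one has B^{-1}·Σ_n |α_n|² ≤ ‖Σ_n α_n g_n‖² ≤ B·Σ_n |α_n|². Then for every sequence (w_n) of complex numbers with |w_n| ≤ 1 for all n, the infinite matrix whose (i,j) entry is (B² − w_i·conj(w_j))·⟨g_j, g_i⟩ is positive semidefinite. -/
open scoped ComplexOrder

/-! The quadratic form of the matrix at `α` is `B² ‖∑ αᵢ gᵢ‖² - ‖∑ conj(wᵢ) αᵢ gᵢ‖²`.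
Since `|conj(wᵢ) αᵢ| ≤ |αᵢ|`, the upper Riesz bound gives `‖∑ conj(wᵢ) αᵢ gᵢ‖² ≤ B ∑ |αᵢ|²`,
and the lower one gives `B ∑ |αᵢ|² ≤ B² ‖∑ αᵢ gᵢ‖²`. -/

section GramForm

variable {𝕜 H ι : Type*} [RCLike 𝕜] [NormedAddCommGroup H] [InnerProductSpace 𝕜 H]

theorem sum_sum_conj_mul_inner_eq_norm_sum_smul_sq (g : ι → H) (s : Finset ι) (γ : ι → 𝕜) :
    ∑ i ∈ s, ∑ j ∈ s, starRingEnd 𝕜 (γ i) * γ j * inner 𝕜 (g i) (g j)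
      = (‖∑ i ∈ s, γ i • g i‖ : 𝕜) ^ 2 := by
  rw [← inner_self_eq_norm_sq_to_K, sum_inner]
  refine Finset.sum_congr rfl fun i _ => ?_
  rw [inner_sum]
  refine Finset.sum_congr rfl fun j _ => ?_
  rw [inner_smul_left, inner_smul_right]
  ring

theorem sum_sum_conj_mul_sub_mul_inner_eq (g : ι → H) (s : Finset ι) (α w : ι → 𝕜) (c : 𝕜) :
    ∑ i ∈ s, ∑ j ∈ s, starRingEnd 𝕜 (α i) * α j *
        ((c - w i * starRingEnd 𝕜 (w j)) * inner 𝕜 (g i) (g j))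
      = c * (‖∑ i ∈ s, α i • g i‖ : 𝕜) ^ 2
        - (‖∑ i ∈ s, (starRingEnd 𝕜 (w i) * α i) • g i‖ : 𝕜) ^ 2 := by
  rw [← sum_sum_conj_mul_inner_eq_norm_sum_smul_sq, ← sum_sum_conj_mul_inner_eq_norm_sum_smul_sq,
    Finset.mul_sum, ← Finset.sum_sub_distrib]
  refine Finset.sum_congr rfl fun i _ => ?_
  rw [Finset.mul_sum, ← Finset.sum_sub_distrib]
  refine Finset.sum_congr rfl fun j _ => ?_
  simp only [map_mul, RCLike.conj_conj]
  ring

end GramForm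

theorem stmt_1_general {H : Type*} [NormedAddCommGroup H] [InnerProductSpace ℂ H]
    (g : ℕ → H) (B : ℝ) (hB : 1 ≤ B)
    (hframe : ∀ (s : Finset ℕ) (α : ℕ → ℂ),
      B⁻¹ * (∑ i ∈ s, ‖α i‖ ^ 2) ≤ ‖∑ i ∈ s, α i • g i‖ ^ 2 ∧
      ‖∑ i ∈ s, α i • g i‖ ^ 2 ≤ B * ∑ i ∈ s, ‖α i‖ ^ 2) :
    ∀ w : ℕ → ℂ, (∀ n, ‖w n‖ ≤ 1) →
      ∀ (s : Finset ℕ) (α : ℕ → ℂ),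
        0 ≤ ∑ i ∈ s, ∑ j ∈ s, (starRingEnd ℂ) (α i) * α j *
          ((((B : ℂ) ^ 2) - w i * (starRingEnd ℂ) (w j)) * (inner ℂ (g i) (g j) : ℂ)) := by
  intro w hw s α
  set β : ℕ → ℂ := fun i => starRingEnd ℂ (w i) * α i
  have hB0 : 0 < B := zero_lt_one.trans_le hB
  have hβα : ∑ i ∈ s, ‖β i‖ ^ 2 ≤ ∑ i ∈ s, ‖α i‖ ^ 2 := by
    refine Finset.sum_le_sum fun i _ => pow_le_pow_left₀ (norm_nonneg _) ?_ 2
    simpa [β] using mul_le_of_le_one_left (norm_nonneg (α i)) (hw i)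
  have hnorm : ‖∑ i ∈ s, β i • g i‖ ^ 2 ≤ B ^ 2 * ‖∑ i ∈ s, α i • g i‖ ^ 2 :=
    calc ‖∑ i ∈ s, β i • g i‖ ^ 2 ≤ B * ∑ i ∈ s, ‖β i‖ ^ 2 := (hframe s β).2
      _ ≤ B * ∑ i ∈ s, ‖α i‖ ^ 2 := mul_le_mul_of_nonneg_left hβα hB0.le
      _ = B ^ 2 * (B⁻¹ * ∑ i ∈ s, ‖α i‖ ^ 2) := by field_simp
      _ ≤ B ^ 2 * ‖∑ i ∈ s, α i • g i‖ ^ 2 := by gcongr; exact (hframe s α).1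
  rw [sum_sum_conj_mul_sub_mul_inner_eq]
  simpa using Complex.zero_le_real.mpr (sub_nonneg.mpr hnorm)

theorem stmt_1 {H : Type*} [NormedAddCommGroup H] [InnerProductSpace ℂ H] [CompleteSpace H]
    (g : ℕ → H) (B : ℝ) (hB : 1 ≤ B)
    (hframe : ∀ (s : Finset ℕ) (α : ℕ → ℂ),
      B⁻¹ * (∑ i ∈ s, ‖α i‖ ^ 2) ≤ ‖∑ i ∈ s, α i • g i‖ ^ 2 ∧
      ‖∑ i ∈ s, α i • g i‖ ^ 2 ≤ B * ∑ i ∈ s, ‖α i‖ ^ 2) :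
    ∀ w : ℕ → ℂ, (∀ n, ‖w n‖ ≤ 1) →
      ∀ (s : Finset ℕ) (α : ℕ → ℂ),
        0 ≤ ∑ i ∈ s, ∑ j ∈ s, (starRingEnd ℂ) (α i) * α j *
          ((((B : ℂ) ^ 2) - w i * (starRingEnd ℂ) (w j)) * (inner ℂ (g i) (g j) : ℂ)) :=
  stmt_1_general g B hB hframe
end

section
/- Let (z_n)_{n≥1} be a sequence of points in the open unit disc 𝔻 ⊂ ℂ, let C > 0, and let (f_n)_{n≥1} be a sequence of holomorphic functions f_n : 𝔻 → ℂ such that Σ_n |f_n(z)|² ≤ C² for every z ∈ 𝔻 and f_n(z_m) = δ_{nm} for all n, m (Kronecker delta). Then for every bounded sequence (w_n) of complex numbers there exists a holomorphic function f : 𝔻 → ℂ with |f(z)| ≤ C²·sup_n |w_n| for all z ∈ 𝔻 and f(z_n) = w_n for all n. (One may take f(z) = Σ_n w_n·f_n(z)², which converges absolutely at every z ∈ 𝔻.) -/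
/-!
Take `g = ∑ wₙ fₙ²`. Pointwise, `‖wₙ fₙ(x)²‖ ≤ M ‖fₙ(x)‖²` with `M = sup ‖wₙ‖`, which gives
`‖g‖ ≤ C² M`, and the Kronecker condition gives `g(zₙ) = wₙ`. For holomorphy, the Cauchy formula
bounds `‖fₙ‖²` on a closed disc by a constant times its mean over a larger concentric circle; the
partial sums of these means are means of `∑ ‖fₙ‖² ≤ C²`, so they are summable and the series
converges locally uniformly by the Weierstrass M-test.
-/

open Metric Real Filter

theorem norm_circleAverage_le {E : Type*} [NormedAddCommGroup E] [NormedSpace ℝ E]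
    (f : ℂ → E) (c : ℂ) (R : ℝ) :
    ‖circleAverage f c R‖ ≤ circleAverage (‖f ·‖) c R := by
  rw [circleAverage_def, circleAverage_def, norm_smul, Real.norm_of_nonneg (by positivity),
    smul_eq_mul]
  gcongr
  exact intervalIntegral.norm_integral_le_integral_norm two_pi_pos.le

theorem DiffContOnCl.norm_le_mul_circleAverage_norm {E : Type*} [NormedAddCommGroup E]
    [NormedSpace ℂ E] [CompleteSpace E] {F : ℂ → E} {c w : ℂ} {r R : ℝ}
    (hF : DiffContOnCl ℂ F (ball c R)) (hw : ‖w - c‖ ≤ r) (hrR : r < R) :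
    ‖F w‖ ≤ R / (R - r) * Real.circleAverage (‖F ·‖) c R := by
  have hRpos : 0 < R := (norm_nonneg _).trans_lt (hw.trans_lt hrR)
  have hR : |R| = R := abs_of_pos hRpos
  rw [← hR] at hF
  have hw' : w ∈ ball c |R| := by rw [hR, mem_ball_iff_norm]; linarith
  have hkernel : ∀ z ∈ sphere c |R|, ‖((z - c) / (z - w)) • F z‖ ≤ R / (R - r) * ‖F z‖ := by
    intro z hz
    rw [hR, mem_sphere_iff_norm] at hz
    have hzw : R - r ≤ ‖z - w‖ := by
      have := norm_sub_norm_le (z - c) (w - c)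
      rw [sub_sub_sub_cancel_right] at this
      linarith
    rw [norm_smul, norm_div, hz]
    gcongr
  have hcont : ContinuousOn F (sphere c |R|) :=
    hF.continuousOn.mono <| by
      rw [closure_ball c (abs_pos.2 hRpos.ne').ne']; exact sphere_subset_closedBall
  have hkernel_cont : ContinuousOn (fun z ↦ (z - c) / (z - w)) (sphere c |R|) :=
    (continuousOn_id.sub continuousOn_const).div (continuousOn_id.sub continuousOn_const)
      fun z hz hzw ↦ (mem_ball.1 hw').ne (sub_eq_zero.1 hzw ▸ mem_sphere.1 hz)
  calc ‖F w‖ = ‖Real.circleAverage (fun z ↦ ((z - c) / (z - w)) • F z) c R‖ := by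
        rw [hF.circleAverage_smul_div hw']
    _ ≤ Real.circleAverage (fun z ↦ ‖((z - c) / (z - w)) • F z‖) c R := norm_circleAverage_le _ _ _
    _ ≤ Real.circleAverage (fun z ↦ R / (R - r) * ‖F z‖) c R :=
        circleAverage_mono (hkernel_cont.smul hcont).norm.circleIntegrable'
          (continuousOn_const.mul hcont.norm).circleIntegrable' hkernel
    _ = R / (R - r) * Real.circleAverage (‖F ·‖) c R :=
        circleAverage_fun_smul (a := R / (R - r)) (f := (‖F ·‖))

section

variable {ι : Type*} {f : ι → ℂ → ℂ} {w : ι → ℂ} {B M : ℝ}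

theorem summable_circleAverage_sq_norm {c : ℂ} {R : ℝ} (hR : 0 ≤ R)
    (hf : ∀ i, ContinuousOn (f i) (sphere c R))
    (hB : ∀ x ∈ sphere c R, ∀ s : Finset ι, ∑ i ∈ s, ‖f i x‖ ^ 2 ≤ B) :
    Summable fun i ↦ circleAverage (fun z ↦ ‖f i z‖ ^ 2) c R := by
  refine summable_of_sum_le (c := B)
    (fun i ↦ circleAverage_nonneg_of_nonneg fun _ _ ↦ by positivity) fun s ↦ ?_
  have hcont : ∀ i, ContinuousOn (fun z ↦ ‖f i z‖ ^ 2) (sphere c R) := fun i ↦ (hf i).norm.pow 2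
  rw [← circleAverage_fun_sum fun i _ ↦ (hcont i).circleIntegrable hR]
  refine circleAverage_mono_on_of_le_circle
    ((continuousOn_finsetSum s fun i _ ↦ hcont i).circleIntegrable hR) fun x hx ↦ ?_
  exact hB x (abs_of_nonneg hR ▸ hx) s

theorem norm_tsum_mul_sq_le {a : ι → ℂ} (hB : ∀ s : Finset ι, ∑ i ∈ s, ‖a i‖ ^ 2 ≤ B)
    (hw : ∀ i, ‖w i‖ ≤ M) (hM : 0 ≤ M) :
    ‖∑' i, w i * a i ^ 2‖ ≤ B * M := by
  have hsum : Summable fun i ↦ ‖a i‖ ^ 2 := summable_of_sum_le (fun _ ↦ by positivity) hB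
  have hterm : ∀ i, ‖w i * a i ^ 2‖ ≤ M * ‖a i‖ ^ 2 := fun i ↦ by
    rw [norm_mul, norm_pow]; gcongr; exact hw i
  calc ‖∑' i, w i * a i ^ 2‖ ≤ M * ∑' i, ‖a i‖ ^ 2 :=
        tsum_of_norm_bounded (hsum.hasSum.mul_left M) hterm
    _ ≤ M * B := by gcongr; exact hsum.tsum_le_of_sum_le hB
    _ = B * M := mul_comm _ _

variable {U : Set ℂ}

theorem tendstoUniformlyOn_tsum_mul_sq (hf : ∀ i, DifferentiableOn ℂ (f i) U)
    (hB : ∀ x ∈ U, ∀ s : Finset ι, ∑ i ∈ s, ‖f i x‖ ^ 2 ≤ B) (hw : ∀ i, ‖w i‖ ≤ M)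
    {c : ℂ} {r R : ℝ} (hr : 0 ≤ r) (hrR : r < R) (hU : closedBall c R ⊆ U) :
    TendstoUniformlyOn (fun s x ↦ ∑ i ∈ s, w i * f i x ^ 2) (fun x ↦ ∑' i, w i * f i x ^ 2)
      atTop (closedBall c r) := by
  have hsphere : sphere c R ⊆ U := sphere_subset_closedBall.trans hU
  have hsum := summable_circleAverage_sq_norm (hr.trans hrR.le)
    (fun i ↦ (hf i).continuousOn.mono hsphere) fun x hx ↦ hB x (hsphere hx)
  refine tendstoUniformlyOn_tsum ((hsum.mul_left (R / (R - r))).mul_left M) fun i x hx ↦ ?_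
  have hcauchy : ‖f i x‖ ^ 2 ≤ R / (R - r) * circleAverage (fun z ↦ ‖f i z‖ ^ 2) c R := by
    simpa only [Pi.pow_apply, norm_pow] using (((hf i).pow 2).diffContOnCl_ball hU)
      |>.norm_le_mul_circleAverage_norm (mem_closedBall_iff_norm.1 hx) hrR
  rw [norm_mul, norm_pow]
  exact mul_le_mul (hw i) hcauchy (by positivity) ((norm_nonneg _).trans (hw i))

theorem differentiableOn_tsum_mul_sq (hf : ∀ i, DifferentiableOn ℂ (f i) U)
    (hB : ∀ x ∈ U, ∀ s : Finset ι, ∑ i ∈ s, ‖f i x‖ ^ 2 ≤ B) (hw : ∀ i, ‖w i‖ ≤ M)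
    (hU : IsOpen U) :
    DifferentiableOn ℂ (fun x ↦ ∑' i, w i * f i x ^ 2) U := by
  have hloc : TendstoLocallyUniformlyOn (fun s x ↦ ∑ i ∈ s, w i * f i x ^ 2)
      (fun x ↦ ∑' i, w i * f i x ^ 2) atTop U := by
    refine tendstoLocallyUniformlyOn_of_forall_exists_nhds fun x hx ↦ ?_
    obtain ⟨ε, hε, hball⟩ := nhds_basis_closedBall.mem_iff.1 (hU.mem_nhds hx)
    exact ⟨closedBall x (ε / 2), mem_nhdsWithin_of_mem_nhds (closedBall_mem_nhds x (half_pos hε)),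
      tendstoUniformlyOn_tsum_mul_sq hf hB hw (half_pos hε).le (half_lt_self hε) hball⟩
  exact hloc.differentiableOn
    (Eventually.of_forall fun s ↦ .fun_sum fun i _ ↦ ((hf i).pow 2).const_mul (w i)) hU

end

theorem stmt_5_general (z : ℕ → ℂ) (C : ℝ)
    (f : ℕ → ℂ → ℂ)
    (hdiff : ∀ n, DifferentiableOn ℂ (f n) (Metric.ball 0 1))
    (hbd : ∀ x ∈ Metric.ball (0 : ℂ) 1, ∀ s : Finset ℕ, ∑ n ∈ s, ‖f n x‖ ^ 2 ≤ C ^ 2)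
    (hdelta : ∀ n m, f n (z m) = if n = m then 1 else 0) :
    ∀ w : ℕ → ℂ, BddAbove (Set.range fun n => ‖w n‖) →
      ∃ g : ℂ → ℂ, DifferentiableOn ℂ g (Metric.ball 0 1) ∧
        (∀ x ∈ Metric.ball (0 : ℂ) 1, ‖g x‖ ≤ C ^ 2 * ⨆ n, ‖w n‖) ∧
        ∀ n, g (z n) = w n := by
  intro w hw
  have hwM : ∀ n, ‖w n‖ ≤ ⨆ n, ‖w n‖ := le_ciSup hw
  refine ⟨fun x ↦ ∑' n, w n * f n x ^ 2, differentiableOn_tsum_mul_sq hdiff hbd hwM isOpen_ball,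
    fun x hx ↦ norm_tsum_mul_sq_le (hbd x hx) hwM ((norm_nonneg _).trans (hwM 0)), fun n ↦ ?_⟩
  simp [hdelta]

theorem stmt_5 (z : ℕ → ℂ) (hz : ∀ n, ‖z n‖ < 1) (C : ℝ) (hC : 0 < C)
    (f : ℕ → ℂ → ℂ)
    (hdiff : ∀ n, DifferentiableOn ℂ (f n) (Metric.ball 0 1))
    (hbd : ∀ x ∈ Metric.ball (0 : ℂ) 1, ∀ s : Finset ℕ, ∑ n ∈ s, ‖f n x‖ ^ 2 ≤ C ^ 2)
    (hdelta : ∀ n m, f n (z m) = if n = m then 1 else 0) :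
    ∀ w : ℕ → ℂ, BddAbove (Set.range fun n => ‖w n‖) →
      ∃ g : ℂ → ℂ, DifferentiableOn ℂ g (Metric.ball 0 1) ∧
        (∀ x ∈ Metric.ball (0 : ℂ) 1, ‖g x‖ ≤ C ^ 2 * ⨆ n, ‖w n‖) ∧
        ∀ n, g (z n) = w n :=
  stmt_5_general z C f hdiff hbd hdelta
end

section
/- Let (z_n)_{n≥1} be a sequence of points in the open unit disc 𝔻 ⊂ ℂ, fix an index m, and suppose that for each n ≠ m there is a holomorphic function f_n : 𝔻 → ℂ with |f_n(z)| ≤ 1 for all z ∈ 𝔻, f_n(z_n) = 0, and f_n(z_m) ≠ 0, and suppose Σ_{n≠m} (1 − |f_n(z_m)|²) < ∞. Then there exists a holomorphic function φ : 𝔻 → ℂ with |φ(z)| ≤ 1 for all z ∈ 𝔻, φ(z_n) = 0 for every n ≠ m, and |φ(z_m)| ≥ inf_F Π_{n∈F} |f_n(z_m)| > 0, where the infimum is taken over all finite subsets F of the indices n ≠ m. -/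
/-!
Rotate each `f n` by a unimodular constant so that it takes the positive value
`aₙ = ‖f n (z m)‖` at `z m`. Applying the Schwarz–Pick lemma to the Möbius image of a rotated
factor `u` shows `‖u z - 1‖ ≤ C_K (1 - aₙ²)` uniformly for `z` in a compact `K ⊆ 𝔻`, so the
summability hypothesis makes `∏ u` converge locally uniformly on `𝔻`. The limit is holomorphic,
bounded by `1`, and vanishes at each `z n`; at `z m` its modulus is `∏ aₙ`, which is the infimum
of the finite subproducts because `aₙ ≤ 1`, and is positive because `∑ (1 - aₙ) < ∞`.
-/

open Metric Set Complex ComplexConjugate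

/-- `‖mobius a z‖` is the pseudo-hyperbolic distance between `a` and `z`. -/
noncomputable def mobius (a z : ℂ) : ℂ := (z - a) / (1 - conj a * z)

lemma norm_one_sub_conj_mul_sq_sub_norm_sub_sq (a z : ℂ) :
    ‖1 - conj a * z‖ ^ 2 - ‖z - a‖ ^ 2 = (1 - ‖a‖ ^ 2) * (1 - ‖z‖ ^ 2) := by
  simp only [Complex.sq_norm, normSq_apply, sub_re, sub_im, mul_re, mul_im, one_re, one_im,
    conj_re, conj_im]
  ring

lemma norm_sub_le_norm_one_sub_conj_mul {a z : ℂ} (ha : ‖a‖ ≤ 1) (hz : ‖z‖ ≤ 1) :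
    ‖z - a‖ ≤ ‖1 - conj a * z‖ := by
  have hid := norm_one_sub_conj_mul_sq_sub_norm_sub_sq a z
  have hpos : 0 ≤ (1 - ‖a‖ ^ 2) * (1 - ‖z‖ ^ 2) := by
    apply mul_nonneg <;> nlinarith [norm_nonneg a, norm_nonneg z]
  exact (pow_le_pow_iff_left₀ (norm_nonneg _) (norm_nonneg _) two_ne_zero).mp (by linarith)

lemma norm_sub_lt_norm_one_sub_conj_mul {a z : ℂ} (ha : ‖a‖ < 1) (hz : ‖z‖ < 1) :
    ‖z - a‖ < ‖1 - conj a * z‖ := by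
  have hid := norm_one_sub_conj_mul_sq_sub_norm_sub_sq a z
  have hpos : 0 < (1 - ‖a‖ ^ 2) * (1 - ‖z‖ ^ 2) := by
    apply mul_pos <;> nlinarith [norm_nonneg a, norm_nonneg z]
  exact (pow_lt_pow_iff_left₀ (norm_nonneg _) (norm_nonneg _) two_ne_zero).mp (by linarith)

lemma one_sub_conj_mul_ne_zero {a z : ℂ} (ha : ‖a‖ < 1) (hz : ‖z‖ ≤ 1) :
    1 - conj a * z ≠ 0 := by
  rw [sub_ne_zero]
  intro h
  have : ‖conj a * z‖ < 1 := by
    rw [norm_mul, RCLike.norm_conj]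
    nlinarith [norm_nonneg a, norm_nonneg z]
  simp [← h] at this

lemma norm_mobius_le_one {a z : ℂ} (ha : ‖a‖ < 1) (hz : ‖z‖ ≤ 1) : ‖mobius a z‖ ≤ 1 := by
  rw [mobius, norm_div]
  exact div_le_one_of_le₀ (norm_sub_le_norm_one_sub_conj_mul ha.le hz) (norm_nonneg _)

lemma norm_mobius_lt_one {a z : ℂ} (ha : ‖a‖ < 1) (hz : ‖z‖ < 1) : ‖mobius a z‖ < 1 := by
  rw [mobius, norm_div, div_lt_one (norm_pos_iff.mpr (one_sub_conj_mul_ne_zero ha hz.le))]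
  exact norm_sub_lt_norm_one_sub_conj_mul ha hz

lemma mobius_neg_mobius {a z : ℂ} (ha : ‖a‖ < 1) (hz : ‖z‖ ≤ 1) :
    mobius (-a) (mobius a z) = z := by
  have hd := one_sub_conj_mul_ne_zero ha hz
  have ha' : (1 : ℂ) - conj a * a ≠ 0 := one_sub_conj_mul_ne_zero ha ha.le
  have hw : (z - a) / (1 - conj a * z) * (1 - conj a * z) = z - a := div_mul_cancel₀ _ hd
  have hnum : (z - a) / (1 - conj a * z) - -a = z * (1 - conj a * a) / (1 - conj a * z) := by
    rw [eq_div_iff hd]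
    linear_combination hw
  have hden : 1 - conj (-a) * ((z - a) / (1 - conj a * z)) =
      (1 - conj a * a) / (1 - conj a * z) := by
    rw [eq_div_iff hd, map_neg]
    linear_combination conj a * hw
  rw [mobius, mobius, hnum, hden, div_div_div_cancel_right₀ hd, mul_div_cancel_right₀ _ ha']

lemma differentiableOn_mobius {a : ℂ} (ha : ‖a‖ < 1) :
    DifferentiableOn ℂ (mobius a) (closedBall 0 1) :=
  (differentiableOn_id.sub_const a).div (differentiableOn_id.const_mul _ |>.const_sub 1)
    fun _ hz ↦ one_sub_conj_mul_ne_zero ha (mem_closedBall_zero_iff.mp hz)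

theorem norm_le_norm_mobius_of_mapsTo_ball {F : ℂ → ℂ} (hd : DifferentiableOn ℂ F (ball 0 1))
    (h_maps : MapsTo F (ball 0 1) (closedBall 0 1)) {z₀ z : ℂ} (hz₀ : z₀ ∈ ball (0 : ℂ) 1)
    (hz : z ∈ ball (0 : ℂ) 1) (h₀ : F z₀ = 0) : ‖F z‖ ≤ ‖mobius z₀ z‖ := by
  rw [mem_ball_zero_iff] at hz₀ hz
  have hz₀' : ‖-z₀‖ < 1 := by rwa [norm_neg]
  have hmaps_mobius : MapsTo (mobius (-z₀)) (ball 0 1) (ball 0 1) := fun w hw ↦ by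
    rw [mem_ball_zero_iff] at hw ⊢
    exact norm_mobius_lt_one hz₀' hw
  have hG := Complex.norm_le_norm_of_mapsTo_ball
    (hd.comp ((differentiableOn_mobius hz₀').mono ball_subset_closedBall) hmaps_mobius)
    (h_maps.comp hmaps_mobius) (by simpa [mobius] using h₀) (norm_mobius_lt_one hz₀ hz)
  rwa [Function.comp_apply, mobius_neg_mobius hz₀ hz.le] at hG

theorem norm_lt_one_of_mapsTo_ball_of_eq_zero {f : ℂ → ℂ} (hd : DifferentiableOn ℂ f (ball 0 1))
    (h_maps : MapsTo f (ball 0 1) (closedBall 0 1)) {w z : ℂ} (hw : w ∈ ball (0 : ℂ) 1)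
    (hz : z ∈ ball (0 : ℂ) 1) (h₀ : f w = 0) : ‖f z‖ < 1 := by
  refine (mem_closedBall_zero_iff.mp (h_maps hz)).lt_of_ne fun h ↦ ?_
  have hmax : IsMaxOn (norm ∘ f) (ball 0 1) z := fun x hx ↦ by
    simpa [h] using mem_closedBall_zero_iff.mp (h_maps hx)
  have := Complex.eqOn_of_isPreconnected_of_isMaxOn_norm (convex_ball (0 : ℂ) 1).isPreconnected
    isOpen_ball hd hz hmax hw
  simp [h₀] at this
  simp [← this] at h

lemma norm_sub_one_le_of_norm_sub_le {w : ℂ} {a ρ : ℝ} (ha₀ : 0 ≤ a) (ha₁ : a ≤ 1) (hw : ‖w‖ ≤ 1)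
    (hρ₀ : 0 ≤ ρ) (hρ₁ : ρ < 1) (h : ‖w - a‖ ≤ ρ * ‖1 - a * w‖) :
    ‖w - 1‖ ≤ 2 / (1 - ρ) * (1 - a ^ 2) := by
  have ha2 : 0 ≤ 1 - a ^ 2 := by nlinarith
  have hd : ‖1 - a * w‖ ≤ (1 - a ^ 2) + a * (ρ * ‖1 - a * w‖) := calc
    ‖1 - a * w‖ = ‖((1 - a ^ 2 : ℝ) : ℂ) + a * (a - w)‖ := by congr 1; push_cast; ring
    _ ≤ (1 - a ^ 2) + a * ‖w - a‖ := by
      refine (norm_add_le _ _).trans ?_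
      rw [norm_mul, norm_real, norm_real, norm_sub_rev (a : ℂ) w, Real.norm_of_nonneg ha₀,
        Real.norm_of_nonneg ha2]
    _ ≤ (1 - a ^ 2) + a * (ρ * ‖1 - a * w‖) := by gcongr
  have hd' : ‖1 - a * w‖ ≤ (1 - a ^ 2) / (1 - ρ) := by
    rw [le_div_iff₀ (by linarith)]
    nlinarith [norm_nonneg (w - a), norm_nonneg (1 - a * w)]
  have hw1 : ‖w - 1‖ ≤ ‖1 - a * w‖ + (1 - a) := calc
    ‖w - 1‖ = ‖-(1 - a * w) + ((1 - a : ℝ) : ℂ) * w‖ := by congr 1; push_cast; ring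
    _ ≤ ‖1 - a * w‖ + (1 - a) := by
      refine (norm_add_le _ _).trans ?_
      rw [norm_neg, norm_mul, norm_real, Real.norm_of_nonneg (by linarith)]
      nlinarith
  have hρ : 1 ≤ 1 / (1 - ρ) := by rw [le_div_iff₀ (by linarith)]; linarith
  calc ‖w - 1‖ ≤ (1 - a ^ 2) / (1 - ρ) + (1 - a ^ 2) := by nlinarith
    _ ≤ 2 / (1 - ρ) * (1 - a ^ 2) := by
      rw [div_eq_mul_one_div 2, div_eq_mul_one_div (1 - a ^ 2)]
      nlinarith [mul_le_mul_of_nonneg_left hρ ha2]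

theorem norm_sub_one_le_of_mapsTo_ball {u : ℂ → ℂ} (hd : DifferentiableOn ℂ u (ball 0 1))
    (h_maps : MapsTo u (ball 0 1) (closedBall 0 1)) {z₀ z : ℂ} (hz₀ : z₀ ∈ ball (0 : ℂ) 1)
    (hz : z ∈ ball (0 : ℂ) 1) {a : ℝ} (ha₀ : 0 ≤ a) (ha₁ : a < 1) (hu : u z₀ = a) :
    ‖u z - 1‖ ≤ 2 / (1 - ‖mobius z₀ z‖) * (1 - a ^ 2) := by
  have ha : ‖(a : ℂ)‖ < 1 := by rwa [norm_real, Real.norm_of_nonneg ha₀]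
  have huz : ‖u z‖ ≤ 1 := mem_closedBall_zero_iff.mp (h_maps hz)
  have hmaps' : MapsTo (mobius a ∘ u) (ball 0 1) (closedBall 0 1) := fun x hx ↦
    mem_closedBall_zero_iff.mpr (norm_mobius_le_one ha (mem_closedBall_zero_iff.mp (h_maps hx)))
  have hSP := norm_le_norm_mobius_of_mapsTo_ball ((differentiableOn_mobius ha).comp hd h_maps)
    hmaps' hz₀ hz (by simp [hu, mobius])
  rw [Function.comp_apply, mobius, norm_div,
    div_le_iff₀ (norm_pos_iff.mpr (one_sub_conj_mul_ne_zero ha huz)), conj_ofReal] at hSP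
  exact norm_sub_one_le_of_norm_sub_le ha₀ ha₁.le huz (norm_nonneg _)
    (norm_mobius_lt_one (mem_ball_zero_iff.mp hz₀) (mem_ball_zero_iff.mp hz)) hSP

lemma exists_lt_one_forall_norm_mobius_le {K : Set ℂ} (hK : IsCompact K) (hK₁ : K ⊆ ball 0 1)
    {z₀ : ℂ} (hz₀ : z₀ ∈ ball (0 : ℂ) 1) : ∃ R < 1, ∀ z ∈ K, ‖mobius z₀ z‖ ≤ R := by
  rcases K.eq_empty_or_nonempty with rfl | hne
  · exact ⟨0, one_pos, by simp⟩
  have hz₀' := mem_ball_zero_iff.mp hz₀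
  obtain ⟨x, hx, hmax⟩ := hK.exists_isMaxOn hne <| continuous_norm.comp_continuousOn <|
    (differentiableOn_mobius hz₀').continuousOn.mono (hK₁.trans ball_subset_closedBall)
  exact ⟨_, norm_mobius_lt_one hz₀' (mem_ball_zero_iff.mp (hK₁ hx)), fun z hz ↦ hmax hz⟩

lemma norm_conj_div_norm {w : ℂ} (hw : w ≠ 0) : ‖conj w / ‖w‖‖ = 1 := by
  rw [norm_div, RCLike.norm_conj, norm_real, norm_norm, div_self (norm_ne_zero_iff.mpr hw)]

lemma conj_div_norm_mul_self {w : ℂ} (hw : w ≠ 0) : conj w / ‖w‖ * w = ‖w‖ := by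
  have : (‖w‖ : ℂ) ≠ 0 := ofReal_ne_zero.mpr (norm_ne_zero_iff.mpr hw)
  rw [div_mul_eq_mul_div, conj_mul', div_eq_iff this, sq]

lemma hasProdLocallyUniformlyOn_of_norm_sub_one_le {ι α R : Type*} [TopologicalSpace α]
    [LocallyCompactSpace α] [NormedCommRing R] [NormOneClass R] [CompleteSpace R]
    {u : ι → α → R} {s : Set α} {e : ι → ℝ} (hs : IsOpen s) (he : Summable e)
    (hcont : ∀ i, ContinuousOn (u i) s)
    (hbound : ∀ K ⊆ s, IsCompact K → ∃ C, ∀ i, ∀ x ∈ K, ‖u i x - 1‖ ≤ C * e i) :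
    HasProdLocallyUniformlyOn u (fun x ↦ ∏' i, u i x) s := by
  refine hasProdLocallyUniformlyOn_of_forall_compact hs fun K hKs hK ↦ ?_
  obtain ⟨C, hC⟩ := hbound K hKs hK
  simpa using Summable.hasProdUniformlyOn_one_add (f := fun i x ↦ u i x - 1) hK (he.mul_left C)
    (.of_forall hC) fun i ↦ ((hcont i).mono hKs).sub continuousOn_const

theorem hasProdLocallyUniformlyOn_ball_of_summable {ι : Type*} {g : ι → ℂ → ℂ} {a : ι → ℝ}
    {z₀ : ℂ} (hz₀ : z₀ ∈ ball (0 : ℂ) 1) (hd : ∀ i, DifferentiableOn ℂ (g i) (ball 0 1))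
    (h_maps : ∀ i, MapsTo (g i) (ball 0 1) (closedBall 0 1)) (ha₀ : ∀ i, 0 ≤ a i)
    (ha₁ : ∀ i, a i < 1) (hg : ∀ i, g i z₀ = a i) (hsum : Summable fun i ↦ 1 - a i ^ 2) :
    HasProdLocallyUniformlyOn g (fun x ↦ ∏' i, g i x) (ball 0 1) := by
  refine hasProdLocallyUniformlyOn_of_norm_sub_one_le isOpen_ball hsum
    (fun i ↦ (hd i).continuousOn) fun K hK hKc ↦ ?_
  obtain ⟨R, hR, hRK⟩ := exists_lt_one_forall_norm_mobius_le hKc hK hz₀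
  refine ⟨2 / (1 - R), fun i x hx ↦ (norm_sub_one_le_of_mapsTo_ball (hd i) (h_maps i) hz₀ (hK hx)
    (ha₀ i) (ha₁ i) (hg i)).trans ?_⟩
  have ha2 : 0 ≤ 1 - a i ^ 2 := by nlinarith [ha₀ i, ha₁ i]
  have hRx := hRK x hx
  gcongr

theorem HasProdLocallyUniformlyOn.differentiableOn {ι : Type*} {g : ι → ℂ → ℂ} {φ : ℂ → ℂ}
    {U : Set ℂ} (h : HasProdLocallyUniformlyOn g φ U) (hd : ∀ i, DifferentiableOn ℂ (g i) U)
    (hU : IsOpen U) : DifferentiableOn ℂ φ U :=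
  TendstoLocallyUniformlyOn.differentiableOn h
    (.of_forall fun _ ↦ DifferentiableOn.fun_finsetProd fun i _ ↦ hd i) hU

lemma HasProd.norm_le_one {ι R : Type*} [NormedCommRing R] [NormOneClass R] {g : ι → R} {p : R}
    (h : HasProd g p) (hg : ∀ i, ‖g i‖ ≤ 1) : ‖p‖ ≤ 1 :=
  le_of_tendsto' (continuous_norm.tendsto p |>.comp h) fun t ↦ (Finset.norm_prod_le t g).trans
    (Finset.prod_le_one (fun _ _ ↦ norm_nonneg _) fun i _ ↦ hg i)

lemma HasProd.sInf_range_prod_eq {ι : Type*} {a : ι → ℝ} {P : ℝ} (h : HasProd a P)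
    (ha₀ : ∀ i, 0 ≤ a i) (ha₁ : ∀ i, a i ≤ 1) :
    sInf (range fun t : Finset ι ↦ ∏ i ∈ t, a i) = P :=
  (isGLB_of_tendsto_atTop (Finset.prod_anti_set_of_le_one ha₀ ha₁) h).csInf_eq (range_nonempty _)

lemma HasProd.pos_of_summable_one_sub_sq {ι : Type*} {a : ι → ℝ} {P : ℝ} (h : HasProd a P)
    (ha₀ : ∀ i, 0 < a i) (ha₁ : ∀ i, a i ≤ 1) (hsum : Summable fun i ↦ 1 - a i ^ 2) : 0 < P := by
  have hsum' : Summable fun i ↦ ‖a i - 1‖ := by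
    refine hsum.of_nonneg_of_le (fun _ ↦ norm_nonneg _) fun i ↦ ?_
    rw [Real.norm_of_nonpos (by linarith [ha₁ i])]
    nlinarith [ha₀ i, ha₁ i]
  have hP : P ≠ 0 := by
    simpa [h.tprod_eq] using tprod_one_add_ne_zero_of_summable (fun i ↦ by simp [(ha₀ i).ne']) hsum'
  exact hP.symm.lt_of_le <|
    ge_of_tendsto' h fun t ↦ Finset.prod_nonneg fun i _ ↦ (ha₀ i).le

lemma setOf_exists_prod_finset_notMem_eq_range {α M : Type*} [CommMonoid M] (g : α → M) (m : α) :
    {x | ∃ F : Finset α, m ∉ F ∧ x = ∏ n ∈ F, g n} =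
      range fun t : Finset {n // n ≠ m} ↦ ∏ i ∈ t, g i := by
  classical
  ext x
  constructor
  · rintro ⟨F, hm, rfl⟩
    refine ⟨F.subtype (· ≠ m), ?_⟩
    simp only
    rw [Finset.prod_subtype_eq_prod_filter, Finset.filter_true_of_mem fun n hn ↦ ne_of_mem_of_not_mem hn hm]
  · rintro ⟨t, rfl⟩
    exact ⟨t.map (Function.Embedding.subtype _), by simp, by simp⟩

theorem stmt_6 (z : ℕ → ℂ) (hz : ∀ n, ‖z n‖ < 1) (m : ℕ) (f : ℕ → ℂ → ℂ)
    (hdiff : ∀ n, n ≠ m → DifferentiableOn ℂ (f n) (Metric.ball 0 1))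
    (hbd : ∀ n, n ≠ m → ∀ x ∈ Metric.ball (0 : ℂ) 1, ‖f n x‖ ≤ 1)
    (hzero : ∀ n, n ≠ m → f n (z n) = 0)
    (hne : ∀ n, n ≠ m → f n (z m) ≠ 0)
    (hsum : Summable fun n : {n : ℕ // n ≠ m} => 1 - ‖f (n : ℕ) (z m)‖ ^ 2) :
    ∃ φ : ℂ → ℂ, DifferentiableOn ℂ φ (Metric.ball 0 1) ∧
      (∀ x ∈ Metric.ball (0 : ℂ) 1, ‖φ x‖ ≤ 1) ∧
      (∀ n, n ≠ m → φ (z n) = 0) ∧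
      0 < sInf {x : ℝ | ∃ F : Finset ℕ, m ∉ F ∧ x = ∏ n ∈ F, ‖f n (z m)‖} ∧
      sInf {x : ℝ | ∃ F : Finset ℕ, m ∉ F ∧ x = ∏ n ∈ F, ‖f n (z m)‖} ≤ ‖φ (z m)‖ := by
  have hz' : ∀ n, z n ∈ ball (0 : ℂ) 1 := fun n ↦ mem_ball_zero_iff.mpr (hz n)
  have hmaps : ∀ n ≠ m, MapsTo (f n) (ball 0 1) (closedBall 0 1) := fun n hn x hx ↦
    mem_closedBall_zero_iff.mpr (hbd n hn x hx)
  set u : {n // n ≠ m} → ℂ → ℂ := fun n w ↦ conj (f n (z m)) / ‖f n (z m)‖ * f n w with hu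
  have hu_norm : ∀ n w, ‖u n w‖ = ‖f n w‖ := fun n w ↦ by
    rw [hu, norm_mul, norm_conj_div_norm (hne n n.2), one_mul]
  have hu_diff : ∀ n, DifferentiableOn ℂ (u n) (ball 0 1) := fun n ↦ (hdiff n n.2).const_mul _
  have hprod : HasProdLocallyUniformlyOn u (fun x ↦ ∏' n, u n x) (ball 0 1) :=
    hasProdLocallyUniformlyOn_ball_of_summable (hz' m) hu_diff
      (fun n w hw ↦ mem_closedBall_zero_iff.mpr ((hu_norm n w).trans_le (hbd n n.2 w hw)))
      (fun _ ↦ norm_nonneg _)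
      (fun n ↦ norm_lt_one_of_mapsTo_ball_of_eq_zero (hdiff n n.2) (hmaps n n.2) (hz' n) (hz' m)
        (hzero n n.2))
      (fun n ↦ conj_div_norm_mul_self (hne n n.2)) hsum
  have hP : HasProd (fun n : {n // n ≠ m} ↦ ‖f n (z m)‖) ‖∏' n, u n (z m)‖ := by
    simpa only [hu_norm] using (hprod.hasProd (hz' m)).norm
  refine ⟨fun x ↦ ∏' n, u n x, hprod.differentiableOn hu_diff isOpen_ball,
    fun x hx ↦ (hprod.hasProd hx).norm_le_one fun n ↦ (hu_norm n x).trans_le (hbd n n.2 x hx),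
    fun n hn ↦ (hprod.hasProd (hz' n)).unique
      (hasProd_zero_of_exists_eq_zero ⟨⟨n, hn⟩, by simp [hu, hzero n hn]⟩), ?_⟩
  have hf₁ : ∀ n : {n // n ≠ m}, ‖f n (z m)‖ ≤ 1 := fun n ↦ hbd n n.2 (z m) (hz' m)
  rw [setOf_exists_prod_finset_notMem_eq_range, hP.sInf_range_prod_eq (fun _ ↦ norm_nonneg _) hf₁]
  exact ⟨hP.pos_of_summable_one_sub_sq (fun n ↦ norm_pos_iff.mpr (hne n n.2)) hf₁ hsum, le_rfl⟩
end

section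
/- Let (z_n)_{n≥1} be a sequence of distinct points in the open unit disc 𝔻 ⊂ ℂ, and suppose that for every bounded sequence (w_n) of complex numbers there exists a bounded holomorphic function f : 𝔻 → ℂ with f(z_n) = w_n for all n. Then there exists δ > 0 such that for every n there is a holomorphic function f_n : 𝔻 → ℂ with |f_n(z)| ≤ 1 for all z ∈ 𝔻, f_n(z_m) = 0 for all m ≠ n, and |f_n(z_n)| ≥ δ. -/
/-!
The restriction map `f ↦ (f (z n))ₙ` from the Banach space `H^∞` of bounded holomorphic functions
on the disc to `ℓ^∞` is a bounded linear surjection, so by the open mapping theorem every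
`w ∈ ℓ^∞` has a preimage of norm at most `C ‖w‖`. Applied to the unit vectors `eₙ`, this gives
functions of norm at most `C` with `f (z m) = δ_{mn}`; dividing by `C` yields the theorem with
`δ = C⁻¹`.
-/

open Filter Metric Set BoundedContinuousFunction

/-- `H^∞(U)`, realised inside `U →ᵇ ℂ` as the restrictions of functions holomorphic on `U`. -/
def boundedHolomorphic (U : Set ℂ) : Submodule ℂ (U →ᵇ ℂ) where
  carrier := {f | ∃ g : ℂ → ℂ, DifferentiableOn ℂ g U ∧ ∀ x : U, f x = g x}
  add_mem' := by
    rintro f₁ f₂ ⟨g₁, hg₁, hfg₁⟩ ⟨g₂, hg₂, hfg₂⟩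
    exact ⟨g₁ + g₂, hg₁.add hg₂, fun x => by simp [hfg₁, hfg₂]⟩
  zero_mem' := ⟨0, differentiableOn_const 0, fun _ => rfl⟩
  smul_mem' := by
    rintro c f ⟨g, hg, hfg⟩
    exact ⟨c • g, hg.const_smul c, fun x => by simp [hfg]⟩

theorem isClosed_boundedHolomorphic {U : Set ℂ} (hU : IsOpen U) :
    IsClosed (boundedHolomorphic U : Set (U →ᵇ ℂ)) := by
  refine isSeqClosed_iff_isClosed.mp fun u f hu hlim => ?_
  choose g hg hug using hu
  set F := Function.extend Subtype.val f 0
  have hF : ∀ x : U, F x = f x := Subtype.val_injective.extend_apply f 0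
  have hunif : TendstoUniformlyOn g F atTop U := by
    refine Metric.tendstoUniformlyOn_iff.mpr fun ε hε => ?_
    filter_upwards [(tendsto_iff_dist_tendsto_zero.mp hlim).eventually (gt_mem_nhds hε)]
      with n hn x hx
    lift x to U using hx
    calc dist (F x) (g n x) = dist (u n x) (f x) := by rw [hF, hug, dist_comm]
      _ ≤ dist (u n) f := dist_coe_le_dist x
      _ < ε := hn
  exact ⟨F, hunif.tendstoLocallyUniformlyOn.differentiableOn (.of_forall hg) hU,
    fun x => (hF x).symm⟩

theorem exists_mem_boundedHolomorphic_eq {U : Set ℂ} {g : ℂ → ℂ} (hg : DifferentiableOn ℂ g U)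
    {B : ℝ} (hB : ∀ x ∈ U, ‖g x‖ ≤ B) :
    ∃ f ∈ boundedHolomorphic U, ∀ x : U, f x = g x :=
  ⟨ofNormedAddCommGroup (U.domRestrict g) hg.continuousOn.domRestrict B fun x => hB x x.2,
    ⟨g, hg, fun _ => rfl⟩, fun _ => rfl⟩

section RestrictToPoints

variable {U : Set ℂ} {ι : Type*} [TopologicalSpace ι] [DiscreteTopology ι]

noncomputable def restrictToPoints (z : ι → U) : boundedHolomorphic U →L[ℂ] (ι →ᵇ ℂ) :=
  (compContinuousCLM ℂ ℂ ⟨z, continuous_of_discreteTopology⟩).comp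
    (boundedHolomorphic U).subtypeL

theorem surjective_restrictToPoints {z : ι → U}
    (hinterp : ∀ w : ι → ℂ, BddAbove (range fun i => ‖w i‖) →
      ∃ g : ℂ → ℂ, DifferentiableOn ℂ g U ∧ (∃ B : ℝ, ∀ x ∈ U, ‖g x‖ ≤ B) ∧
        ∀ i, g (z i) = w i) :
    Function.Surjective (restrictToPoints z) := by
  intro w
  obtain ⟨g, hg, ⟨B, hB⟩, hgw⟩ := hinterp w ⟨‖w‖, by
    rintro _ ⟨i, rfl⟩
    exact w.norm_coe_le_norm i⟩
  obtain ⟨f, hf, hfg⟩ := exists_mem_boundedHolomorphic_eq hg hB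
  exact ⟨⟨f, hf⟩, ext fun i => (hfg (z i)).trans (hgw i)⟩

theorem exists_holomorphic_norm_le_one_eq_single [DecidableEq ι] (hU : IsOpen U) {z : ι → U}
    (hsurj : Function.Surjective (restrictToPoints z)) :
    ∃ δ : ℝ, 0 < δ ∧ ∀ n, ∃ g : ℂ → ℂ, DifferentiableOn ℂ g U ∧
      (∀ x ∈ U, ‖g x‖ ≤ 1) ∧ ∀ m, g (z m) = (Pi.single n (δ : ℂ) : ι → ℂ) m := by
  have := (isClosed_boundedHolomorphic hU).completeSpace_coe
  obtain ⟨C, hC, hpreimage⟩ := (restrictToPoints z).exists_preimage_norm_le hsurj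
  refine ⟨C⁻¹, inv_pos.mpr hC, fun n => ?_⟩
  let e : ι →ᵇ ℂ := ofNormedAddCommGroupDiscrete (Pi.single n 1) 1 fun m => by
    by_cases h : m = n <;> simp [h]
  obtain ⟨f, hfe, hfC⟩ := hpreimage e
  have hf_norm : ‖f‖ ≤ C := calc
    ‖f‖ ≤ C * ‖e‖ := hfC
    _ ≤ C * 1 := by gcongr; exact norm_ofNormedAddCommGroup_le _ zero_le_one _
    _ = C := mul_one C
  obtain ⟨g, hg, hfg⟩ := f.2
  refine ⟨fun x => (C⁻¹ : ℂ) * g x, hg.const_mul _, fun x hx => ?_, fun m => ?_⟩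
  · rw [norm_mul, ← hfg ⟨x, hx⟩, norm_inv, Complex.norm_real, Real.norm_of_nonneg hC.le,
      inv_mul_le_one₀ hC]
    exact (f.1.norm_coe_le_norm _).trans hf_norm
  · have hval : f.1 (z m) = (Pi.single n 1 : ι → ℂ) m := DFunLike.congr_fun hfe m
    show (C⁻¹ : ℂ) * g (z m) = _
    rw [← hfg, hval]
    by_cases h : m = n <;> simp [h]

end RestrictToPoints

theorem stmt_8_general (z : ℕ → ℂ) (hz : ∀ n, ‖z n‖ < 1)
    (hinterp : ∀ w : ℕ → ℂ, BddAbove (Set.range fun n => ‖w n‖) →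
      ∃ f : ℂ → ℂ, DifferentiableOn ℂ f (Metric.ball 0 1) ∧
        (∃ B : ℝ, ∀ x ∈ Metric.ball (0 : ℂ) 1, ‖f x‖ ≤ B) ∧
        ∀ n, f (z n) = w n) :
    ∃ δ : ℝ, 0 < δ ∧ ∀ n, ∃ f : ℂ → ℂ,
      DifferentiableOn ℂ f (Metric.ball 0 1) ∧
      (∀ x ∈ Metric.ball (0 : ℂ) 1, ‖f x‖ ≤ 1) ∧
      (∀ m, m ≠ n → f (z m) = 0) ∧
      δ ≤ ‖f (z n)‖ := by
  let z' : ℕ → ball (0 : ℂ) 1 := fun n => ⟨z n, mem_ball_zero_iff.mpr (hz n)⟩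
  obtain ⟨δ, hδ, hfamily⟩ :=
    exists_holomorphic_norm_le_one_eq_single isOpen_ball
      (surjective_restrictToPoints (z := z') hinterp)
  refine ⟨δ, hδ, fun n => ?_⟩
  obtain ⟨f, hf, hf_norm, hf_val⟩ := hfamily n
  refine ⟨f, hf, hf_norm, fun m hm => ?_, ?_⟩
  · simpa [hm] using hf_val m
  · rw [show f (z n) = δ by simpa using hf_val n, Complex.norm_real, Real.norm_of_nonneg hδ.le]

theorem stmt_8 (z : ℕ → ℂ) (hz : ∀ n, ‖z n‖ < 1) (hinj : Function.Injective z)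
    (hinterp : ∀ w : ℕ → ℂ, BddAbove (Set.range fun n => ‖w n‖) →
      ∃ f : ℂ → ℂ, DifferentiableOn ℂ f (Metric.ball 0 1) ∧
        (∃ B : ℝ, ∀ x ∈ Metric.ball (0 : ℂ) 1, ‖f x‖ ≤ B) ∧
        ∀ n, f (z n) = w n) :
    ∃ δ : ℝ, 0 < δ ∧ ∀ n, ∃ f : ℂ → ℂ,
      DifferentiableOn ℂ f (Metric.ball 0 1) ∧
      (∀ x ∈ Metric.ball (0 : ℂ) 1, ‖f x‖ ≤ 1) ∧
      (∀ m, m ≠ n → f (z m) = 0) ∧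
      δ ≤ ‖f (z n)‖ :=
  stmt_8_general z hz hinterp
end
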